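/- arXiv:math-ph/0312023 — 4 statements merged into one kernel-verified Lean document; each statement's English description precedes it below -/
import Mathlib

section
/- Let c₀ > 0, let c, f : ℝ → ℝ be continuous with f bounded and c(t) ≥ c₀ for all t ∈ ℝ, and let u : ℝ → ℝ be a bounded differentiable function satisfying u'(t) + c(t)·u(t) = f(t) for all t ∈ ℝ. Then for every t ∈ ℝ the improper integral ∫_{-∞}^{t} f(s)·exp(−∫_{s}^{t} c(τ) dτ) ds converges absolutely and u(t) = ∫_{-∞}^{t} f(s)·exp(−∫_{s}^{t} c(τ) dτ) ds. -/
/-!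
With the integrating factor `w s = exp (-∫_s^t c)`, the equation `u' + c u = f` says that
`(u w)' = f w`. Since `c ≥ c₀ > 0`, `w s ≤ exp (c₀ (s - t))` on `(-∞, t]`, so `f w` is integrable
there and the bounded `u` makes `u w` vanish at `-∞`; as `w t = 1`, the fundamental theorem of
calculus on `(-∞, t]` gives `u t = ∫_{-∞}^t f w`.
-/

open MeasureTheory Filter Set Topology

section IntegratingFactor

variable {c : ℝ → ℝ} {c₀ s t : ℝ}

theorem hasDerivAt_exp_neg_integral (hc : Continuous c) (s t : ℝ) :
    HasDerivAt (fun s => Real.exp (-∫ τ in s..t, c τ))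
      (Real.exp (-∫ τ in s..t, c τ) * c s) s := by
  have hF := intervalIntegral.integral_hasDerivAt_left (hc.intervalIntegrable s t)
    hc.aestronglyMeasurable.stronglyMeasurableAtFilter hc.continuousAt
  simpa using hF.neg.exp

theorem hasDerivAt_mul_exp_neg_integral {u : ℝ → ℝ} {u' : ℝ} (hc : Continuous c)
    (hu : HasDerivAt u u' s) (t : ℝ) :
    HasDerivAt (fun s => u s * Real.exp (-∫ τ in s..t, c τ))
      ((u' + c s * u s) * Real.exp (-∫ τ in s..t, c τ)) s :=
  (hu.mul (hasDerivAt_exp_neg_integral hc s t)).congr_deriv (by ring)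

theorem exp_neg_integral_le (hc : IntervalIntegrable c volume s t)
    (hc_lb : ∀ τ ∈ Icc s t, c₀ ≤ c τ) (hst : s ≤ t) :
    Real.exp (-∫ τ in s..t, c τ) ≤ Real.exp (c₀ * (s - t)) := by
  have h := intervalIntegral.integral_mono_on hst intervalIntegrable_const hc hc_lb
  rw [intervalIntegral.integral_const, smul_eq_mul] at h
  exact Real.exp_le_exp.2 (by linarith)

theorem integrableOn_exp_neg_integral_Iic (hc : Continuous c) (hc₀ : 0 < c₀)
    (hc_lb : ∀ τ ≤ t, c₀ ≤ c τ) :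
    IntegrableOn (fun s => Real.exp (-∫ τ in s..t, c τ)) (Iic t) := by
  have hdom : IntegrableOn (fun s => Real.exp (-(c₀ * t)) * Real.exp (c₀ * s)) (Iic t) :=
    (integrableOn_exp_mul_Iic hc₀ t).const_mul _
  refine hdom.mono' (continuous_iff_continuousAt.2 fun s =>
    (hasDerivAt_exp_neg_integral hc s t).continuousAt).aestronglyMeasurable ?_
  refine (ae_restrict_iff' measurableSet_Iic).2 (.of_forall fun s hs => ?_)
  rw [Real.norm_of_nonneg (Real.exp_pos _).le, ← Real.exp_add, neg_add_eq_sub, ← mul_sub]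
  exact exp_neg_integral_le (hc.intervalIntegrable s t) (fun τ hτ => hc_lb τ hτ.2) hs

theorem tendsto_exp_neg_integral_atBot (hc : Continuous c) (hc₀ : 0 < c₀)
    (hc_lb : ∀ τ ≤ t, c₀ ≤ c τ) :
    Tendsto (fun s => Real.exp (-∫ τ in s..t, c τ)) atBot (𝓝 0) := by
  have hdom : Tendsto (fun s => Real.exp (c₀ * (s - t))) atBot (𝓝 0) :=
    Real.tendsto_exp_atBot.comp <|
      (tendsto_atBot_add_const_right _ (-t) tendsto_id).const_mul_atBot hc₀
  refine squeeze_zero' (.of_forall fun s => (Real.exp_pos _).le) ?_ hdom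
  filter_upwards [Iic_mem_atBot t] with s hs
  exact exp_neg_integral_le (hc.intervalIntegrable s t) (fun τ hτ => hc_lb τ hτ.2) hs

end IntegratingFactor

/-- Representation formula for bounded solutions of `u' + c u = f` on the real line:
`u t = ∫_{-∞}^t f s · exp (−∫_s^t c τ dτ) ds`, the integral converging absolutely. -/
theorem stmt_0 (c₀ : ℝ) (hc₀ : 0 < c₀) (c f : ℝ → ℝ)
    (hc_cont : Continuous c) (hf_cont : Continuous f)
    (hf_bdd : ∃ M : ℝ, ∀ t : ℝ, |f t| ≤ M)
    (hc_lb : ∀ t : ℝ, c₀ ≤ c t)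
    (u : ℝ → ℝ) (hu_diff : Differentiable ℝ u)
    (hu_bdd : ∃ M : ℝ, ∀ t : ℝ, |u t| ≤ M)
    (hu_eq : ∀ t : ℝ, deriv u t + c t * u t = f t) :
    ∀ t : ℝ,
      IntegrableOn (fun s : ℝ => f s * Real.exp (-∫ τ in s..t, c τ)) (Set.Iic t) volume ∧
      u t = ∫ s in Set.Iic t, f s * Real.exp (-∫ τ in s..t, c τ) := by
  intro t
  obtain ⟨Mf, hMf⟩ := hf_bdd
  obtain ⟨Mu, hMu⟩ := hu_bdd
  have hint : IntegrableOn (fun s => f s * Real.exp (-∫ τ in s..t, c τ)) (Iic t) :=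
    (integrableOn_exp_neg_integral_Iic hc_cont hc₀ fun τ _ => hc_lb τ).bdd_mul
      hf_cont.aestronglyMeasurable (.of_forall hMf)
  refine ⟨hint, ?_⟩
  have hderiv : ∀ s ∈ Iic t, HasDerivAt (fun s => u s * Real.exp (-∫ τ in s..t, c τ))
      (f s * Real.exp (-∫ τ in s..t, c τ)) s := fun s _ => by
    simpa only [hu_eq] using hasDerivAt_mul_exp_neg_integral hc_cont (hu_diff s).hasDerivAt t
  have hlim := bdd_le_mul_tendsto_zero' Mu (.of_forall hMu)
    (tendsto_exp_neg_integral_atBot (t := t) hc_cont hc₀ fun τ _ => hc_lb τ)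
  rw [integral_Iic_of_hasDerivAt_of_tendsto' hderiv hint hlim]
  simp
end

section
/- Let m ≥ 1, let B be an m×m real symmetric positive-definite matrix, and let κ ∈ ℝ with κ ≠ 0. Then there is no twice continuously differentiable function v : ℝᵐ → ℝ such that v is bounded, its gradient ∇v is bounded, and −(∑_{i=1}^{m} ∂²v/∂x_i²)(x) + ⟨Bx, ∇v(x)⟩ = κ for every x ∈ ℝᵐ (⟨·,·⟩ the Euclidean inner product). -/
/-!
Maximum principle. If `v` is bounded below, then for every `ε > 0` the coercive function
`v + ε‖x‖²` attains a global minimum at some `x₀`. There `∇v(x₀) = -2εx₀`, so the drift term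
`⟨Bx₀, ∇v(x₀)⟩ = -2ε⟨Bx₀, x₀⟩` is `≤ 0`, and every pure second derivative `∂ᵢ²v(x₀)` is
`≥ -2ε`. Hence `Δₑ v + ⟨Bx, ∇v⟩ ≤ 2εm` at `x₀`, which is incompatible with the equation
`= κ > 0` once `ε` is small; the case `κ < 0` follows by replacing `v` with `-v`.
-/

open Filter Topology Set
open scoped RealInnerProductSpace

theorem IsLocalMin.deriv_deriv_nonneg {f : ℝ → ℝ} {a : ℝ} (h : IsLocalMin f a)
    (hf : ContinuousAt f a) : 0 ≤ deriv (deriv f) a := by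
  by_contra! hneg
  have hmax : IsLocalMax f a := isLocalMax_of_deriv_deriv_neg hneg h.deriv_eq_zero hf
  have hconst : f =ᶠ[𝓝 a] fun _ => f a :=
    (h.and hmax).mono fun x hx => le_antisymm hx.2 hx.1
  exact hneg.ne (by rw [hconst.deriv.deriv_eq]; simp)

section NormedSpace

variable {F : Type*} [NormedAddCommGroup F] [NormedSpace ℝ F]

theorem ContDiff.differentiable_fderiv_apply {f : F → ℝ} (hf : ContDiff ℝ 2 f) (u : F) :
    Differentiable ℝ fun y => fderiv ℝ f y u :=
  ((hf.fderiv_right (m := 1) (by norm_num)).differentiable one_ne_zero).clm_apply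
    (differentiable_const u)

theorem deriv_deriv_comp_add_smul {w : F → ℝ} {x : F} (e : F) (hw : Differentiable ℝ w)
    (hw' : DifferentiableAt ℝ (fun y => fderiv ℝ w y e) x) :
    deriv (deriv fun t : ℝ => w (x + t • e)) 0 = fderiv ℝ (fun y => fderiv ℝ w y e) x e := by
  have hline : ∀ t : ℝ, HasDerivAt (fun s : ℝ => x + s • e) e t := fun t => by
    simpa using ((hasDerivAt_id t).smul_const e).const_add x
  have hderiv : deriv (fun t : ℝ => w (x + t • e)) = fun t => fderiv ℝ w (x + t • e) e :=
    funext fun t => ((hw _).hasFDerivAt.comp_hasDerivAt t (hline t)).deriv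
  rw [hderiv]
  exact (hw'.hasFDerivAt.comp_hasDerivAt_of_eq (0 : ℝ) (hline 0) (by simp)).deriv

theorem IsLocalMin.fderiv_fderiv_apply_nonneg {w : F → ℝ} {x : F} (h : IsLocalMin w x) (e : F)
    (hw : Differentiable ℝ w) (hw' : DifferentiableAt ℝ (fun y => fderiv ℝ w y e) x) :
    0 ≤ fderiv ℝ (fun y => fderiv ℝ w y e) x e := by
  rw [← deriv_deriv_comp_add_smul e hw hw']
  have hcont : Continuous fun t : ℝ => x + t • e := by fun_prop
  refine IsLocalMin.deriv_deriv_nonneg ?_ (hw.continuous.comp hcont).continuousAt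
  exact IsLocalMin.comp_continuous (g := fun t : ℝ => x + t • e) (b := 0) (by simpa using h)
    hcont.continuousAt

end NormedSpace

theorem exists_forall_add_mul_norm_sq_le {F : Type*} [NormedAddCommGroup F] [ProperSpace F]
    {v : F → ℝ} (hv : Continuous v) (hbdd : BddBelow (range v)) {ε : ℝ} (hε : 0 < ε) :
    ∃ x, ∀ y, v x + ε * ‖x‖ ^ 2 ≤ v y + ε * ‖y‖ ^ 2 := by
  obtain ⟨C, hC⟩ := hbdd
  have hw : Continuous fun y => v y + ε * ‖y‖ ^ 2 := by fun_prop
  have hcoer : Tendsto (fun y : F => C + ε * ‖y‖ ^ 2) (cocompact F) atTop :=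
    tendsto_atTop_add_const_left _ _ <|
      ((tendsto_pow_atTop two_ne_zero).const_mul_atTop hε).comp tendsto_norm_cocompact_atTop
  exact hw.exists_forall_le <|
    tendsto_atTop_mono (fun y => by have := hC (mem_range_self y); linarith) hcoer

variable {E : Type*} [NormedAddCommGroup E] [InnerProductSpace ℝ E]

theorem fderiv_add_mul_norm_sq_apply {v : E → ℝ} {x : E} (hv : DifferentiableAt ℝ v x)
    (ε : ℝ) (u : E) :
    fderiv ℝ (fun y => v y + ε * ‖y‖ ^ 2) x u = fderiv ℝ v x u + 2 * ε * ⟪x, u⟫ := by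
  have hsq := (hasStrictFDerivAt_norm_sq x).differentiableAt
  rw [fderiv_fun_add hv (hsq.const_mul ε), fderiv_const_mul hsq, fderiv_norm_sq_apply]
  simp only [add_apply, smul_apply, coe_innerSL_apply, nsmul_eq_mul, Nat.cast_ofNat, smul_eq_mul]
  ring

theorem fderiv_fderiv_add_mul_norm_sq_apply {v : E → ℝ} {x : E} (ε : ℝ) (e : E)
    (hv : Differentiable ℝ v) (hv' : DifferentiableAt ℝ (fun y => fderiv ℝ v y e) x) :
    fderiv ℝ (fun y => fderiv ℝ (fun z => v z + ε * ‖z‖ ^ 2) y e) x e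
      = fderiv ℝ (fun y => fderiv ℝ v y e) x e + 2 * ε * ‖e‖ ^ 2 := by
  have hfun : (fun y => fderiv ℝ (fun z => v z + ε * ‖z‖ ^ 2) y e)
      = fun y => fderiv ℝ v y e + 2 * ε * ⟪e, y⟫ :=
    funext fun y => by rw [fderiv_add_mul_norm_sq_apply (hv y), real_inner_comm]
  have hinner : HasFDerivAt (fun y => 2 * ε * ⟪e, y⟫) ((2 * ε) • innerSL ℝ e) x :=
    (innerSL ℝ e).hasFDerivAt.const_mul (2 * ε)
  rw [hfun, fderiv_fun_add hv' hinner.differentiableAt, hinner.fderiv]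
  simp

/-- With `e` the standard basis of `ℝᵐ` and `A = B`, this is `Δₑ v + ⟨Bx, ∇v⟩` for the
geometer's Laplacian `Δₑ = -∑ ∂²/∂xᵢ²`. -/
noncomputable def driftLaplacian {ι : Type*} [Fintype ι] (e : ι → E) (A : E → E)
    (v : E → ℝ) (x : E) : ℝ :=
  -(∑ i, fderiv ℝ (fun y => fderiv ℝ v y (e i)) x (e i)) + fderiv ℝ v x (A x)

section driftLaplacian

variable {ι : Type*} [Fintype ι] (e : ι → E) {A : E → E}

theorem driftLaplacian_neg (v : E → ℝ) (x : E) :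
    driftLaplacian e A (fun y => -v y) x = -driftLaplacian e A v x := by
  simp only [driftLaplacian, fderiv_fun_neg, neg_apply, Finset.sum_neg_distrib]
  ring

variable [ProperSpace E] (hA : ∀ x, 0 ≤ ⟪A x, x⟫) {v : E → ℝ} (hv : ContDiff ℝ 2 v)
include hA hv

theorem exists_driftLaplacian_le (hbdd : BddBelow (range v)) {ε : ℝ} (hε : 0 < ε) :
    ∃ x, driftLaplacian e A v x ≤ 2 * ε * ∑ i, ‖e i‖ ^ 2 := by
  obtain ⟨x, hx⟩ := exists_forall_add_mul_norm_sq_le hv.continuous hbdd hε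
  have hmin : IsLocalMin (fun y => v y + ε * ‖y‖ ^ 2) x := .of_forall hx
  have hw : ContDiff ℝ 2 fun y => v y + ε * ‖y‖ ^ 2 :=
    hv.add (contDiff_const.mul (contDiff_norm_sq ℝ))
  have hv1 : Differentiable ℝ v := hv.differentiable two_ne_zero
  have hgrad : fderiv ℝ v x (A x) = -(2 * ε * ⟪A x, x⟫) := by
    have := congrArg (· (A x)) hmin.fderiv_eq_zero
    simp only [fderiv_add_mul_norm_sq_apply (hv1 x), zero_apply] at this
    rw [real_inner_comm]
    linarith
  have hhess : ∀ i, -(2 * ε * ‖e i‖ ^ 2) ≤ fderiv ℝ (fun y => fderiv ℝ v y (e i)) x (e i) := by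
    intro i
    have := hmin.fderiv_fderiv_apply_nonneg (e i) (hw.differentiable two_ne_zero)
      (hw.differentiable_fderiv_apply (e i) x)
    rw [fderiv_fderiv_add_mul_norm_sq_apply ε (e i) hv1 (hv.differentiable_fderiv_apply (e i) x)]
      at this
    linarith
  refine ⟨x, ?_⟩
  have hsum := Finset.sum_le_sum fun i (_ : i ∈ Finset.univ) => hhess i
  rw [Finset.sum_neg_distrib, ← Finset.mul_sum] at hsum
  have := mul_nonneg hε.le (hA x)
  simp only [driftLaplacian, hgrad]
  linarith

theorem exists_driftLaplacian_lt (hbdd : BddBelow (range v)) {κ : ℝ} (hκ : 0 < κ) :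
    ∃ x, driftLaplacian e A v x < κ := by
  set S := ∑ i, ‖e i‖ ^ 2
  have hS : 0 ≤ S := Finset.sum_nonneg fun i _ => sq_nonneg _
  obtain ⟨x, hx⟩ := exists_driftLaplacian_le e hA hv hbdd (ε := κ / (2 * (S + 1))) (by positivity)
  refine ⟨x, hx.trans_lt ?_⟩
  rw [mul_div_assoc', div_mul_eq_mul_div, div_lt_iff₀ (by positivity)]
  nlinarith

theorem exists_lt_driftLaplacian (hbdd : BddAbove (range v)) {κ : ℝ} (hκ : κ < 0) :
    ∃ x, κ < driftLaplacian e A v x := by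
  obtain ⟨C, hC⟩ := hbdd
  have hbdd_neg : BddBelow (range fun y => -v y) :=
    ⟨-C, by rintro _ ⟨y, rfl⟩; simpa using hC (mem_range_self y)⟩
  obtain ⟨x, hx⟩ := exists_driftLaplacian_lt e hA hv.neg hbdd_neg (neg_pos.mpr hκ)
  exact ⟨x, by rw [driftLaplacian_neg] at hx; linarith⟩

end driftLaplacian

theorem stmt_13_general (m : ℕ) (B : Matrix (Fin m) (Fin m) ℝ)
    (hB_pos : B.PosDef) (κ : ℝ) (hκ : κ ≠ 0) :
    ¬ ∃ v : EuclideanSpace ℝ (Fin m) → ℝ,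
        ContDiff ℝ 2 v ∧
        (∃ C : ℝ, ∀ x, |v x| ≤ C) ∧
        (∃ C : ℝ, ∀ x, ‖fderiv ℝ v x‖ ≤ C) ∧
        (∀ x : EuclideanSpace ℝ (Fin m),
          -(∑ i : Fin m, fderiv ℝ (fun y => fderiv ℝ v y (EuclideanSpace.single i 1))
              x (EuclideanSpace.single i 1))
            + fderiv ℝ v x (Matrix.toEuclideanLin B x) = κ) := by
  rintro ⟨v, hv, ⟨C, hC⟩, -, hpde⟩
  have hB : ∀ x, 0 ≤ ⟪Matrix.toEuclideanLin B x, x⟫ :=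
    (Matrix.isPositive_toEuclideanLin_iff.mpr hB_pos.posSemidef).inner_nonneg_left
  let e : Fin m → EuclideanSpace ℝ (Fin m) := fun i => EuclideanSpace.single i 1
  rcases hκ.lt_or_gt with hκ | hκ
  · obtain ⟨x, hx⟩ := exists_lt_driftLaplacian e hB hv
      ⟨C, by rintro _ ⟨x, rfl⟩; exact (abs_le.mp (hC x)).2⟩ hκ
    exact hx.ne' (hpde x)
  · obtain ⟨x, hx⟩ := exists_driftLaplacian_lt e hB hv
      ⟨-C, by rintro _ ⟨x, rfl⟩; exact (abs_le.mp (hC x)).1⟩ hκ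
    exact hx.ne (hpde x)

/-- Nonexistence of bounded solutions with bounded gradient of
`Δₑ v + ⟨Bx, ∇v⟩ = κ` on `ℝᵐ` (with `Δₑ = −∑ ∂²/∂xᵢ²`) when `B` is symmetric
positive definite and `κ ≠ 0`. -/
theorem stmt_13 (m : ℕ) (hm : 1 ≤ m) (B : Matrix (Fin m) (Fin m) ℝ)
    (hB_symm : B.IsSymm) (hB_pos : B.PosDef) (κ : ℝ) (hκ : κ ≠ 0) :
    ¬ ∃ v : EuclideanSpace ℝ (Fin m) → ℝ,
        ContDiff ℝ 2 v ∧
        (∃ C : ℝ, ∀ x, |v x| ≤ C) ∧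
        (∃ C : ℝ, ∀ x, ‖fderiv ℝ v x‖ ≤ C) ∧
        (∀ x : EuclideanSpace ℝ (Fin m),
          -(∑ i : Fin m, fderiv ℝ (fun y => fderiv ℝ v y (EuclideanSpace.single i 1))
              x (EuclideanSpace.single i 1))
            + fderiv ℝ v x (Matrix.toEuclideanLin B x) = κ) :=
  stmt_13_general m B hB_pos κ hκ
end

section
/- Let c > 0, u₀ ∈ ℝ, L ∈ ℝ, and let g : ℝ → ℝ be a bounded continuous function such that (1/t)·∫_{0}^{t} g(s) ds → L as t → +∞. Define u(t) = u₀·e^{−ct} + ∫_{0}^{t} g(τ)·e^{−c(t−τ)} dτ. Then (1/t)·∫_{0}^{t} u(s) ds → L/c as t → +∞. -/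
/-! The time average of `u` is read off the ODE it solves: `u' = g - c u` integrates to
`c ∫₀ᵗ u = ∫₀ᵗ g + u₀ - u t`. Bounded forcing keeps `u` bounded on `[0, ∞)` (by `|u₀| + M / c`
when `|g| ≤ M`), so after dividing by `c t` the boundary term vanishes and the average of `u`
tends to `L / c`. -/

open MeasureTheory Filter Real

theorem integral_eq_of_hasDerivAt_sub_mul {f g : ℝ → ℝ} {c a b : ℝ} (hc : c ≠ 0)
    (hf : ∀ t, HasDerivAt f (g t - c * f t) t) (hg : IntervalIntegrable g volume a b) :
    ∫ s in a..b, f s = (f a + (∫ s in a..b, g s) - f b) / c := by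
  have hf_cont : Continuous f := continuous_iff_continuousAt.2 fun t => (hf t).continuousAt
  have hf_int : IntervalIntegrable (fun s => c * f s) volume a b :=
    (by fun_prop : Continuous fun s => c * f s).intervalIntegrable a b
  have hftc := intervalIntegral.integral_eq_sub_of_hasDerivAt (fun s _ => hf s) (hg.sub hf_int)
  rw [intervalIntegral.integral_sub hg hf_int, intervalIntegral.integral_const_mul] at hftc
  field_simp
  linarith

theorem tendsto_average_of_hasDerivAt_sub_mul {f g : ℝ → ℝ} {c L : ℝ} (hc : c ≠ 0)
    (hf : ∀ t, HasDerivAt f (g t - c * f t) t) (hg : ∀ t, IntervalIntegrable g volume 0 t)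
    (hf_bdd : IsBoundedUnder (· ≤ ·) atTop fun t => ‖f t‖)
    (hg_avg : Tendsto (fun t => (1 / t) * ∫ s in (0:ℝ)..t, g s) atTop (nhds L)) :
    Tendsto (fun t => (1 / t) * ∫ s in (0:ℝ)..t, f s) atTop (nhds (L / c)) := by
  have hboundary : Tendsto (fun t : ℝ => t⁻¹ * (f 0 - f t)) atTop (nhds 0) := by
    refine tendsto_inv_atTop_zero.zero_mul_isBoundedUnder_le ?_
    obtain ⟨B, hB⟩ := hf_bdd
    refine isBoundedUnder_of_eventually_le (a := ‖f 0‖ + B) ((eventually_map.1 hB).mono ?_)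
    intro t (ht : ‖f t‖ ≤ B)
    show ‖f 0 - f t‖ ≤ ‖f 0‖ + B
    linarith [norm_sub_le (f 0) (f t)]
  have hsum := (hg_avg.add hboundary).div_const c
  rw [add_zero] at hsum
  refine hsum.congr fun t => ?_
  rw [integral_eq_of_hasDerivAt_sub_mul hc hf (hg t)]
  ring

/-- The variation-of-constants solution of `u' = g - c u`, `u 0 = u₀`. -/
noncomputable def duhamel (c u₀ : ℝ) (g : ℝ → ℝ) (t : ℝ) : ℝ :=
  u₀ * exp (-c * t) + ∫ τ in (0:ℝ)..t, g τ * exp (-c * (t - τ))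

theorem duhamel_eq_exp_mul (c u₀ : ℝ) (g : ℝ → ℝ) (t : ℝ) :
    duhamel c u₀ g t = exp (-c * t) * (u₀ + ∫ τ in (0:ℝ)..t, g τ * exp (c * τ)) := by
  have hsplit : ∀ τ, g τ * exp (-c * (t - τ)) = exp (-c * t) * (g τ * exp (c * τ)) := by
    intro τ
    rw [mul_left_comm, ← exp_add]
    ring_nf
  simp only [duhamel, hsplit, intervalIntegral.integral_const_mul]
  ring

theorem hasDerivAt_duhamel {c : ℝ} (u₀ : ℝ) {g : ℝ → ℝ} (hg : Continuous g) (t : ℝ) :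
    HasDerivAt (duhamel c u₀ g) (g t - c * duhamel c u₀ g t) t := by
  have hprim : HasDerivAt (fun s => u₀ + ∫ τ in (0:ℝ)..s, g τ * exp (c * τ))
      (g t * exp (c * t)) t :=
    ((hg.mul (by fun_prop)).integral_hasStrictDerivAt 0 t).hasDerivAt.const_add u₀
  have hexp : HasDerivAt (fun s => exp (-c * s)) (exp (-c * t) * -c) t := by
    simpa using ((hasDerivAt_id t).const_mul (-c)).exp
  have hcancel : exp (-c * t) * exp (c * t) = 1 := by
    rw [← exp_add, neg_mul, neg_add_cancel, exp_zero]
  rw [funext (duhamel_eq_exp_mul c u₀ g)]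
  refine (hexp.mul hprim).congr_deriv ?_
  linear_combination g t * hcancel

theorem integral_exp_mul_le {c : ℝ} (hc : 0 < c) (t : ℝ) :
    ∫ τ in (0:ℝ)..t, exp (c * τ) ≤ exp (c * t) / c := by
  rw [intervalIntegral.integral_comp_mul_left exp hc.ne', integral_exp, mul_zero, exp_zero,
    smul_eq_mul, inv_mul_eq_div]
  gcongr
  linarith

theorem abs_duhamel_le {c M : ℝ} (hc : 0 < c) (u₀ : ℝ) {g : ℝ → ℝ} (hM : ∀ t, |g t| ≤ M)
    {t : ℝ} (ht : 0 ≤ t) :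
    |duhamel c u₀ g t| ≤ |u₀| + M / c := by
  have hforce : |∫ τ in (0:ℝ)..t, g τ * exp (c * τ)| ≤ M * (exp (c * t) / c) := by
    calc |∫ τ in (0:ℝ)..t, g τ * exp (c * τ)| ≤ ∫ τ in (0:ℝ)..t, M * exp (c * τ) := by
          have hpoint : ∀ τ, ‖g τ * exp (c * τ)‖ ≤ M * exp (c * τ) := fun τ => by
            rw [Real.norm_eq_abs, abs_mul, abs_exp]
            exact mul_le_mul_of_nonneg_right (hM τ) (exp_pos _).le
          exact intervalIntegral.norm_integral_le_of_norm_le ht (ae_of_all _ fun τ _ => hpoint τ)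
            ((by fun_prop : Continuous fun τ => M * exp (c * τ)).intervalIntegrable 0 t)
      _ ≤ M * (exp (c * t) / c) := by
          rw [intervalIntegral.integral_const_mul]
          exact mul_le_mul_of_nonneg_left (integral_exp_mul_le hc t)
            ((abs_nonneg _).trans (hM 0))
  have hdecay : exp (-c * t) ≤ 1 := exp_le_one_iff.2 (by nlinarith)
  have hcancel : exp (-c * t) * exp (c * t) = 1 := by
    rw [← exp_add, neg_mul, neg_add_cancel, exp_zero]
  rw [duhamel_eq_exp_mul, abs_mul, abs_exp]
  calc exp (-c * t) * |u₀ + ∫ τ in (0:ℝ)..t, g τ * exp (c * τ)|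
      ≤ exp (-c * t) * (|u₀| + M * (exp (c * t) / c)) := by
        gcongr
        exact (abs_add_le _ _).trans (by gcongr)
    _ = exp (-c * t) * |u₀| + M / c := by
        linear_combination (M / c) * hcancel
    _ ≤ |u₀| + M / c := by
        gcongr
        exact mul_le_of_le_one_left (abs_nonneg _) hdecay

/-- Averaging along trajectories: if the Birkhoff averages of `g` tend to `L`, then
the time averages of `u(t) = u₀ e^{−ct} + ∫₀ᵗ g(τ) e^{−c(t−τ)} dτ` tend to `L / c`. -/
theorem stmt_17 (c u₀ L : ℝ) (hc : 0 < c) (g : ℝ → ℝ)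
    (hg_cont : Continuous g) (hg_bdd : ∃ M : ℝ, ∀ t : ℝ, |g t| ≤ M)
    (hg_avg : Tendsto (fun t : ℝ => (1 / t) * ∫ s in (0:ℝ)..t, g s) atTop (nhds L))
    (u : ℝ → ℝ)
    (hu : ∀ t : ℝ, u t = u₀ * Real.exp (-c * t)
        + ∫ τ in (0:ℝ)..t, g τ * Real.exp (-c * (t - τ))) :
    Tendsto (fun t : ℝ => (1 / t) * ∫ s in (0:ℝ)..t, u s) atTop (nhds (L / c)) := by
  obtain rfl : u = duhamel c u₀ g := funext hu
  obtain ⟨M, hM⟩ := hg_bdd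
  have hu_bdd : IsBoundedUnder (· ≤ ·) atTop fun t => ‖duhamel c u₀ g t‖ :=
    isBoundedUnder_of_eventually_le <| (eventually_ge_atTop 0).mono fun t ht =>
      abs_duhamel_le hc u₀ hM ht
  exact tendsto_average_of_hasDerivAt_sub_mul hc.ne' (hasDerivAt_duhamel u₀ hg_cont)
    (fun t => hg_cont.intervalIntegrable 0 t) hu_bdd hg_avg
end

section
/- Let S be an m×m real symmetric positive-definite matrix and let A be an m×m real matrix with trace zero such that S·A is antisymmetric (i.e. (SA)ᵀ = −SA). Then for every continuously differentiable function v : ℝᵐ → ℝ such that v and its gradient ∇v are bounded, ∫_{ℝᵐ} e^{−⟨Sx, x⟩}·⟨Ax, ∇v(x)⟩ dx = 0, where ⟨·,·⟩ is the Euclidean inner product and the integral is with respect to Lebesgue measure (the integrand is absolutely integrable). -/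
/-!
With `g x = exp (-⟪S x, x⟫)`, the linear vector field `x ↦ A x` is divergence free (`tr A = 0`)
and tangent to the level sets of `g` (`S` is symmetric and `S A` antisymmetric, so
`⟪S x, A x⟫ = 0`). Expanding `A x = ∑ ℓᵢ(x) eᵢ` in a basis, `tr A = 0` gives
`g · Dv(x)(A x) = ∑ᵢ g · ∂ᵢ(v ℓᵢ)`, and integrating each term by parts turns the integral into
`-∫ v · Dg(x)(A x) = 0`. The bound `⟪S x, x⟫ ≥ c ‖x‖²` of a positive definite form, together with
the boundedness of `v` and `Dv`, makes all integrands integrable.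
-/

open Matrix MeasureTheory RealInnerProductSpace

section IntegrationByParts

variable {E : Type*} [NormedAddCommGroup E] [NormedSpace ℝ E]

theorem fderiv_mul_clm_apply {v : E → ℝ} (hv : Differentiable ℝ v) (ℓ : E →L[ℝ] ℝ) (x y : E) :
    fderiv ℝ (fun z => v z * ℓ z) x y = v x * ℓ y + ℓ x * fderiv ℝ v x y := by
  rw [fderiv_fun_mul (hv x) ℓ.differentiableAt, ℓ.fderiv]
  simp

variable [MeasurableSpace E] [BorelSpace E] {μ : Measure E}

theorem integrable_mul_mul_clm {g v : E → ℝ} {Cv : ℝ} (ℓ : E →L[ℝ] ℝ)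
    (hg : Continuous g) (hg_int : Integrable (fun x => (1 + ‖x‖) * g x) μ)
    (hv : Continuous v) (hv_bdd : ∀ x, |v x| ≤ Cv) :
    Integrable (fun x => g x * (v x * ℓ x)) μ := by
  refine (hg_int.norm.const_mul (Cv * ‖ℓ‖)).mono' (by fun_prop) (ae_of_all _ fun x => ?_)
  have hCv : 0 ≤ Cv := (abs_nonneg _).trans (hv_bdd x)
  have hℓx : ‖ℓ x‖ ≤ ‖ℓ‖ * ‖x‖ := ℓ.le_opNorm x
  rw [norm_mul, norm_mul, norm_mul, Real.norm_eq_abs (v x),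
    Real.norm_of_nonneg (by positivity : (0 : ℝ) ≤ 1 + ‖x‖)]
  calc ‖g x‖ * (|v x| * ‖ℓ x‖) ≤ ‖g x‖ * (Cv * (‖ℓ‖ * ‖x‖)) := by gcongr; exact hv_bdd x
    _ ≤ Cv * ‖ℓ‖ * ((1 + ‖x‖) * ‖g x‖) := by
        have : 0 ≤ Cv * ‖ℓ‖ * ‖g x‖ := by positivity
        nlinarith

theorem integrable_fderiv_apply_mul_mul_clm {g v : E → ℝ} {Cv : ℝ} (ℓ : E →L[ℝ] ℝ) (y : E)
    (hg'_int : Integrable (fun x => ‖x‖ * ‖fderiv ℝ g x‖) μ)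
    (hv : Continuous v) (hv_bdd : ∀ x, |v x| ≤ Cv) :
    Integrable (fun x => fderiv ℝ g x y * (v x * ℓ x)) μ := by
  refine (hg'_int.norm.const_mul (‖y‖ * Cv * ‖ℓ‖)).mono'
    ((measurable_fderiv_apply_const ℝ g y).aestronglyMeasurable.mul (by fun_prop))
    (ae_of_all _ fun x => ?_)
  have hCv : 0 ≤ Cv := (abs_nonneg _).trans (hv_bdd x)
  have hgy : ‖fderiv ℝ g x y‖ ≤ ‖fderiv ℝ g x‖ * ‖y‖ := (fderiv ℝ g x).le_opNorm y
  have hℓx : ‖ℓ x‖ ≤ ‖ℓ‖ * ‖x‖ := ℓ.le_opNorm x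
  rw [norm_mul, norm_mul, norm_mul, norm_norm, norm_norm, Real.norm_eq_abs (v x)]
  calc ‖fderiv ℝ g x y‖ * (|v x| * ‖ℓ x‖)
      ≤ (‖fderiv ℝ g x‖ * ‖y‖) * (Cv * (‖ℓ‖ * ‖x‖)) := by gcongr; exact hv_bdd x
    _ = ‖y‖ * Cv * ‖ℓ‖ * (‖x‖ * ‖fderiv ℝ g x‖) := by ring

theorem integrable_mul_fderiv_mul_clm_apply {g v : E → ℝ} {Cv Cd : ℝ} (ℓ : E →L[ℝ] ℝ) (y : E)
    (hg : Continuous g) (hg_int : Integrable (fun x => (1 + ‖x‖) * g x) μ)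
    (hv : Differentiable ℝ v) (hv_bdd : ∀ x, |v x| ≤ Cv) (hdv_bdd : ∀ x, ‖fderiv ℝ v x‖ ≤ Cd) :
    Integrable (fun x => g x * fderiv ℝ (fun z => v z * ℓ z) x y) μ := by
  refine (hg_int.norm.const_mul ((Cv + Cd) * ‖ℓ‖ * ‖y‖)).mono'
    (hg.aestronglyMeasurable.mul (measurable_fderiv_apply_const ℝ _ y).aestronglyMeasurable)
    (ae_of_all _ fun x => ?_)
  have hCv : 0 ≤ Cv := (abs_nonneg _).trans (hv_bdd x)
  have hCd : 0 ≤ Cd := (norm_nonneg _).trans (hdv_bdd x)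
  have h_dv : ‖fderiv ℝ v x y‖ ≤ Cd * ‖y‖ :=
    ((fderiv ℝ v x).le_opNorm y).trans (by gcongr; exact hdv_bdd x)
  have h_dw : ‖fderiv ℝ (fun z => v z * ℓ z) x y‖ ≤ (Cv + Cd) * ‖ℓ‖ * ‖y‖ * (1 + ‖x‖) := by
    rw [fderiv_mul_clm_apply hv]
    calc ‖v x * ℓ y + ℓ x * fderiv ℝ v x y‖
        ≤ |v x| * ‖ℓ y‖ + ‖ℓ x‖ * ‖fderiv ℝ v x y‖ := by
          rw [← Real.norm_eq_abs, ← norm_mul, ← norm_mul]; exact norm_add_le _ _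
      _ ≤ Cv * (‖ℓ‖ * ‖y‖) + (‖ℓ‖ * ‖x‖) * (Cd * ‖y‖) := by
          gcongr
          exacts [hv_bdd x, ℓ.le_opNorm y, ℓ.le_opNorm x]
      _ ≤ (Cv + Cd) * ‖ℓ‖ * ‖y‖ * (1 + ‖x‖) := by
          have : 0 ≤ Cv * ‖ℓ‖ * ‖y‖ * ‖x‖ + Cd * ‖ℓ‖ * ‖y‖ := by positivity
          nlinarith
  rw [norm_mul, norm_mul, Real.norm_of_nonneg (by positivity : (0 : ℝ) ≤ 1 + ‖x‖)]
  calc ‖g x‖ * ‖fderiv ℝ (fun z => v z * ℓ z) x y‖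
      ≤ ‖g x‖ * ((Cv + Cd) * ‖ℓ‖ * ‖y‖ * (1 + ‖x‖)) := by gcongr
    _ = (Cv + Cd) * ‖ℓ‖ * ‖y‖ * ((1 + ‖x‖) * ‖g x‖) := by ring

variable [FiniteDimensional ℝ E]

theorem integrable_mul_fderiv_apply {g v : E → ℝ} {Cd : ℝ} (L : E →ₗ[ℝ] E)
    (hg : Continuous g) (hg_int : Integrable (fun x => (1 + ‖x‖) * g x) μ)
    (hdv_bdd : ∀ x, ‖fderiv ℝ v x‖ ≤ Cd) :
    Integrable (fun x => g x * fderiv ℝ v x (L x)) μ := by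
  set L' := LinearMap.toContinuousLinearMap L
  refine (hg_int.norm.const_mul (Cd * ‖L'‖)).mono'
    (hg.aestronglyMeasurable.mul ((ContinuousLinearMap.apply ℝ ℝ).aestronglyMeasurable_comp₂
      L'.continuous.aestronglyMeasurable (measurable_fderiv ℝ v).aestronglyMeasurable))
    (ae_of_all _ fun x => ?_)
  have hCd : 0 ≤ Cd := (norm_nonneg _).trans (hdv_bdd x)
  have h_dv : ‖fderiv ℝ v x (L x)‖ ≤ Cd * (‖L'‖ * ‖x‖) :=
    ((fderiv ℝ v x).le_opNorm _).trans
      (mul_le_mul (hdv_bdd x) (L'.le_opNorm x) (norm_nonneg _) hCd)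
  rw [norm_mul, norm_mul, Real.norm_of_nonneg (by positivity : (0 : ℝ) ≤ 1 + ‖x‖)]
  calc ‖g x‖ * ‖fderiv ℝ v x (L x)‖ ≤ ‖g x‖ * (Cd * (‖L'‖ * ‖x‖)) := by gcongr
    _ ≤ Cd * ‖L'‖ * ((1 + ‖x‖) * ‖g x‖) := by
        have : 0 ≤ Cd * ‖L'‖ * ‖g x‖ := by positivity
        nlinarith

variable [μ.IsAddHaarMeasure]

theorem integral_mul_fderiv_mul_clm_apply {g v : E → ℝ} {Cv Cd : ℝ} (ℓ : E →L[ℝ] ℝ) (y : E)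
    (hg : Differentiable ℝ g) (hg_int : Integrable (fun x => (1 + ‖x‖) * g x) μ)
    (hg'_int : Integrable (fun x => ‖x‖ * ‖fderiv ℝ g x‖) μ)
    (hv : Differentiable ℝ v) (hv_bdd : ∀ x, |v x| ≤ Cv) (hdv_bdd : ∀ x, ‖fderiv ℝ v x‖ ≤ Cd) :
    ∫ x, g x * fderiv ℝ (fun z => v z * ℓ z) x y ∂μ = -∫ x, fderiv ℝ g x y * (v x * ℓ x) ∂μ :=
  integral_mul_fderiv_eq_neg_fderiv_mul_of_integrable
    (integrable_fderiv_apply_mul_mul_clm ℓ y hg'_int hv.continuous hv_bdd)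
    (integrable_mul_fderiv_mul_clm_apply ℓ y hg.continuous hg_int hv hv_bdd hdv_bdd)
    (integrable_mul_mul_clm ℓ hg.continuous hg_int hv.continuous hv_bdd)
    (fun x _ => hg x) (fun x _ => (hv x).mul ℓ.differentiableAt)

theorem integral_mul_fderiv_apply_eq_zero_of_trace_eq_zero {g v : E → ℝ} {Cv Cd : ℝ}
    (L : E →ₗ[ℝ] E) (hL : LinearMap.trace ℝ E L = 0)
    (hg : Differentiable ℝ g) (hgL : ∀ x, fderiv ℝ g x (L x) = 0)
    (hg_int : Integrable (fun x => (1 + ‖x‖) * g x) μ)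
    (hg'_int : Integrable (fun x => ‖x‖ * ‖fderiv ℝ g x‖) μ)
    (hv : Differentiable ℝ v) (hv_bdd : ∀ x, |v x| ≤ Cv) (hdv_bdd : ∀ x, ‖fderiv ℝ v x‖ ≤ Cd) :
    ∫ x, g x * fderiv ℝ v x (L x) ∂μ = 0 := by
  let b := Module.finBasis ℝ E
  let ℓ i : E →L[ℝ] ℝ := LinearMap.toContinuousLinearMap (b.coord i ∘ₗ L)
  have hL_sum (x : E) : ∑ i, ℓ i x • b i = L x := b.sum_repr (L x)
  have h_tr : ∑ i, ℓ i (b i) = 0 := by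
    rw [← hL, LinearMap.trace_eq_matrix_trace ℝ b, Matrix.trace]
    simp [ℓ, LinearMap.toMatrix_apply]
  have h_div (x : E) :
      ∑ i, g x * fderiv ℝ (fun z => v z * ℓ i z) x (b i) = g x * fderiv ℝ v x (L x) := by
    simp only [fderiv_mul_clm_apply hv, mul_add, Finset.sum_add_distrib, ← Finset.mul_sum, h_tr,
      mul_zero, zero_add]
    rw [← hL_sum, map_sum]
    simp only [map_smul, smul_eq_mul]
  have h_flux (x : E) : ∑ i, fderiv ℝ g x (b i) * (v x * ℓ i x) = 0 := by
    calc ∑ i, fderiv ℝ g x (b i) * (v x * ℓ i x) = v x * fderiv ℝ g x (∑ i, ℓ i x • b i) := by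
          simp only [map_sum, map_smul, smul_eq_mul, Finset.mul_sum]
          exact Finset.sum_congr rfl fun i _ => by ring
      _ = 0 := by rw [hL_sum, hgL, mul_zero]
  calc ∫ x, g x * fderiv ℝ v x (L x) ∂μ
      = ∑ i, ∫ x, g x * fderiv ℝ (fun z => v z * ℓ i z) x (b i) ∂μ := by
        simp_rw [← h_div]
        exact integral_finsetSum _ fun i _ =>
          integrable_mul_fderiv_mul_clm_apply (ℓ i) (b i) hg.continuous hg_int hv hv_bdd hdv_bdd
    _ = -∫ x, ∑ i, fderiv ℝ g x (b i) * (v x * ℓ i x) ∂μ := by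
        rw [integral_finsetSum _ fun i _ =>
          integrable_fderiv_apply_mul_mul_clm (ℓ i) (b i) hg'_int hv.continuous hv_bdd,
          ← Finset.sum_neg_distrib]
        exact Finset.sum_congr rfl fun i _ =>
          integral_mul_fderiv_mul_clm_apply (ℓ i) (b i) hg hg_int hg'_int hv hv_bdd hdv_bdd
    _ = 0 := by simp [h_flux]

end IntegrationByParts

section GaussianWeight

variable {E : Type*} [NormedAddCommGroup E] [InnerProductSpace ℝ E]

theorem fderiv_exp_neg_inner_apply_self_apply (T : E →L[ℝ] E) (x y : E) :
    fderiv ℝ (fun z => Real.exp (-⟪T z, z⟫)) x y =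
      -Real.exp (-⟪T x, x⟫) * (⟪T y, x⟫ + ⟪T x, y⟫) := by
  have h : HasFDerivAt (fun z => -⟪T z, z⟫) _ x :=
    (T.hasFDerivAt.inner ℝ (hasFDerivAt_id x)).neg
  rw [h.exp.fderiv]
  simp [fderivInnerCLM_apply]
  ring

theorem fderiv_exp_neg_inner_apply_self_apply_eq_zero {T : E →L[ℝ] E} {L : E → E}
    (hT : (T : E →ₗ[ℝ] E).IsSymmetric) (hTL : ∀ x, ⟪T (L x), x⟫ = 0) (x : E) :
    fderiv ℝ (fun z => Real.exp (-⟪T z, z⟫)) x (L x) = 0 := by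
  have : ⟪T x, L x⟫ = 0 := ((hT x (L x)).trans (real_inner_comm _ _)).trans (hTL x)
  rw [fderiv_exp_neg_inner_apply_self_apply, hTL, this, add_zero, mul_zero]

theorem norm_fderiv_exp_neg_inner_apply_self_le (T : E →L[ℝ] E) (x : E) :
    ‖fderiv ℝ (fun z => Real.exp (-⟪T z, z⟫)) x‖ ≤ Real.exp (-⟪T x, x⟫) * (2 * ‖T‖ * ‖x‖) := by
  refine ContinuousLinearMap.opNorm_le_bound _ (by positivity) fun y => ?_
  rw [fderiv_exp_neg_inner_apply_self_apply, norm_mul, norm_neg,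
    Real.norm_of_nonneg (Real.exp_pos _).le]
  have h₁ : ‖⟪T y, x⟫‖ ≤ ‖T‖ * ‖y‖ * ‖x‖ :=
    (norm_inner_le_norm _ _).trans (by gcongr; exact T.le_opNorm y)
  have h₂ : ‖⟪T x, y⟫‖ ≤ ‖T‖ * ‖x‖ * ‖y‖ :=
    (norm_inner_le_norm _ _).trans (by gcongr; exact T.le_opNorm x)
  calc Real.exp (-⟪T x, x⟫) * ‖⟪T y, x⟫ + ⟪T x, y⟫‖
      ≤ Real.exp (-⟪T x, x⟫) * (‖T‖ * ‖y‖ * ‖x‖ + ‖T‖ * ‖x‖ * ‖y‖) := by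
        gcongr; exact (norm_add_le _ _).trans (add_le_add h₁ h₂)
    _ = Real.exp (-⟪T x, x⟫) * (2 * ‖T‖ * ‖x‖) * ‖y‖ := by ring

variable [FiniteDimensional ℝ E]

theorem exists_pos_mul_sq_norm_le_inner_apply_self (T : E →L[ℝ] E) (hT : ∀ x ≠ 0, 0 < ⟪T x, x⟫) :
    ∃ c > 0, ∀ x, c * ‖x‖ ^ 2 ≤ ⟪T x, x⟫ := by
  rcases subsingleton_or_nontrivial E with hE | hE
  · exact ⟨1, one_pos, fun x => by simp [Subsingleton.elim x 0]⟩
  obtain ⟨x₀, hx₀, hmin⟩ := (isCompact_sphere (0 : E) 1).exists_isMinOn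
    (NormedSpace.sphere_nonempty.mpr zero_le_one)
    (T.continuous.inner (𝕜 := ℝ) continuous_id).continuousOn
  have hx₀_norm : ‖x₀‖ = 1 := mem_sphere_zero_iff_norm.mp hx₀
  refine ⟨⟪T x₀, x₀⟫, hT x₀ (norm_ne_zero_iff.mp (by simp [hx₀_norm])), fun x => ?_⟩
  rcases eq_or_ne x 0 with rfl | hx
  · simp
  have hx_pos : 0 < ‖x‖ := norm_pos_iff.mpr hx
  have h_unit : ‖x‖⁻¹ • x ∈ Metric.sphere (0 : E) 1 := by
    simp [norm_smul, hx_pos.ne']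
  have h : ⟪T x₀, x₀⟫ ≤ ⟪T (‖x‖⁻¹ • x), ‖x‖⁻¹ • x⟫ := hmin h_unit
  have h_scale : ⟪T (‖x‖⁻¹ • x), ‖x‖⁻¹ • x⟫ = ⟪T x, x⟫ / ‖x‖ ^ 2 := by
    rw [map_smul, real_inner_smul_left, real_inner_smul_right]
    field_simp
  rwa [h_scale, le_div_iff₀ (by positivity)] at h

variable [MeasurableSpace E] [BorelSpace E]

theorem integrable_exp_neg_mul_sq_norm {b : ℝ} (hb : 0 < b) :
    Integrable (fun x : E => Real.exp (-b * ‖x‖ ^ 2)) := by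
  have h := (GaussianFourier.integrable_cexp_neg_mul_sq_norm_add (V := E) (b := b)
    (by simpa using hb) 0 0).norm
  convert h using 2 with x
  simp [Complex.norm_exp, ← Complex.ofReal_pow]

theorem integrable_one_add_sq_norm_mul_exp_neg_mul_sq_norm {b : ℝ} (hb : 0 < b) :
    Integrable (fun x : E => (1 + ‖x‖ ^ 2) * Real.exp (-b * ‖x‖ ^ 2)) := by
  refine ((integrable_exp_neg_mul_sq_norm (half_pos hb)).const_mul (1 + 2 / b)).mono'
    (by fun_prop) (ae_of_all _ fun x => ?_)
  set t := ‖x‖ ^ 2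
  set u := Real.exp (-(b / 2) * t)
  have hu_le : u ≤ 1 := Real.exp_le_one_iff.mpr (by simp only [t]; nlinarith [sq_nonneg ‖x‖])
  have htu : t * u ≤ 2 / b := by
    have h := Real.add_one_le_exp (b / 2 * t)
    rw [le_div_iff₀ hb]
    calc t * u * b = 2 * (b / 2 * t) * u := by ring
      _ ≤ 2 * Real.exp (b / 2 * t) * u := by gcongr; linarith
      _ = 2 := by rw [mul_assoc, ← Real.exp_add]; simp
  have h_split : Real.exp (-b * t) = u * u := by rw [← Real.exp_add]; ring_nf
  rw [Real.norm_of_nonneg (by positivity), h_split]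
  nlinarith [Real.exp_pos (-(b / 2) * t)]

variable (T : E →L[ℝ] E)

theorem integrable_one_add_norm_mul_exp_neg_inner_apply_self (hT : ∀ x ≠ 0, 0 < ⟪T x, x⟫) :
    Integrable (fun x : E => (1 + ‖x‖) * Real.exp (-⟪T x, x⟫)) := by
  obtain ⟨c, hc, hTc⟩ := exists_pos_mul_sq_norm_le_inner_apply_self T hT
  refine ((integrable_one_add_sq_norm_mul_exp_neg_mul_sq_norm hc).const_mul 2).mono'
    (by fun_prop) (ae_of_all _ fun x => ?_)
  rw [Real.norm_of_nonneg (by positivity)]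
  have h_exp : Real.exp (-⟪T x, x⟫) ≤ Real.exp (-c * ‖x‖ ^ 2) := by
    gcongr; linarith [hTc x]
  have h_norm : 1 + ‖x‖ ≤ 2 * (1 + ‖x‖ ^ 2) := by nlinarith [sq_nonneg (‖x‖ - 1)]
  calc (1 + ‖x‖) * Real.exp (-⟪T x, x⟫) ≤ 2 * (1 + ‖x‖ ^ 2) * Real.exp (-c * ‖x‖ ^ 2) := by
        gcongr
    _ = _ := by ring

theorem integrable_norm_mul_norm_fderiv_exp_neg_inner_apply_self (hT : ∀ x ≠ 0, 0 < ⟪T x, x⟫) :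
    Integrable (fun x : E => ‖x‖ * ‖fderiv ℝ (fun z => Real.exp (-⟪T z, z⟫)) x‖) := by
  obtain ⟨c, hc, hTc⟩ := exists_pos_mul_sq_norm_le_inner_apply_self T hT
  refine ((integrable_one_add_sq_norm_mul_exp_neg_mul_sq_norm hc).const_mul (2 * ‖T‖)).mono'
    (continuous_norm.measurable.mul (measurable_fderiv ℝ _).norm).aestronglyMeasurable
    (ae_of_all _ fun x => ?_)
  rw [Real.norm_of_nonneg (by positivity)]
  have h_exp : Real.exp (-⟪T x, x⟫) ≤ Real.exp (-c * ‖x‖ ^ 2) := by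
    gcongr; linarith [hTc x]
  calc ‖x‖ * ‖fderiv ℝ (fun z => Real.exp (-⟪T z, z⟫)) x‖
      ≤ ‖x‖ * (Real.exp (-⟪T x, x⟫) * (2 * ‖T‖ * ‖x‖)) := by
        gcongr; exact norm_fderiv_exp_neg_inner_apply_self_le T x
    _ ≤ 2 * ‖T‖ * ((1 + ‖x‖ ^ 2) * Real.exp (-c * ‖x‖ ^ 2)) := by
        have : 0 ≤ 2 * ‖T‖ * Real.exp (-c * ‖x‖ ^ 2) := by positivity
        nlinarith [mul_le_mul_of_nonneg_left h_exp (by positivity : 0 ≤ 2 * ‖T‖ * ‖x‖ ^ 2)]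

end GaussianWeight

namespace Matrix

variable {n : Type*} [Fintype n] [DecidableEq n]

theorem trace_toEuclideanLin {𝕜 : Type*} [RCLike 𝕜] (A : Matrix n n 𝕜) :
    LinearMap.trace 𝕜 _ (toEuclideanLin A) = A.trace := by
  rw [toEuclideanLin_eq_toLin_orthonormal,
    LinearMap.trace_eq_matrix_trace 𝕜 (EuclideanSpace.basisFun n 𝕜).toBasis,
    LinearMap.toMatrix_toLin]

theorem inner_toEuclideanLin_self_pos {S : Matrix n n ℝ} (hS : S.PosDef)
    {x : EuclideanSpace ℝ n} (hx : x ≠ 0) : 0 < ⟪toEuclideanLin S x, x⟫ := by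
  rw [EuclideanSpace.inner_eq_star_dotProduct]
  simpa [dotProduct_comm] using hS.dotProduct_mulVec_pos (x := x.ofLp) (by simpa using hx)

theorem inner_toEuclideanLin_self_eq_zero_of_transpose_eq_neg {B : Matrix n n ℝ} (hB : Bᵀ = -B)
    (x : EuclideanSpace ℝ n) : ⟪toEuclideanLin B x, x⟫ = 0 := by
  rw [EuclideanSpace.inner_eq_star_dotProduct]
  have h : x.ofLp ⬝ᵥ B *ᵥ x.ofLp = -(x.ofLp ⬝ᵥ B *ᵥ x.ofLp) := by
    conv_lhs =>
      rw [dotProduct_mulVec, ← mulVec_transpose, hB, neg_mulVec, neg_dotProduct, dotProduct_comm]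
  simp [toLpLin_apply]
  linarith

end Matrix

theorem stmt_19_general (m : ℕ) (S A : Matrix (Fin m) (Fin m) ℝ)
    (hS_pos : S.PosDef)
    (hA_tr : Matrix.trace A = 0) (hSA : (S * A)ᵀ = -(S * A))
    (v : EuclideanSpace ℝ (Fin m) → ℝ) (hv : ContDiff ℝ 1 v)
    (hv_bdd : ∃ C : ℝ, ∀ x, |v x| ≤ C)
    (hdv_bdd : ∃ C : ℝ, ∀ x, ‖fderiv ℝ v x‖ ≤ C) :
    Integrable (fun x : EuclideanSpace ℝ (Fin m) =>
        Real.exp (-⟪Matrix.toEuclideanLin S x, x⟫) *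
          fderiv ℝ v x (Matrix.toEuclideanLin A x)) volume ∧
    ∫ x : EuclideanSpace ℝ (Fin m),
        Real.exp (-⟪Matrix.toEuclideanLin S x, x⟫) *
          fderiv ℝ v x (Matrix.toEuclideanLin A x) = 0 := by
  obtain ⟨Cv, hCv⟩ := hv_bdd
  obtain ⟨Cd, hCd⟩ := hdv_bdd
  let T := LinearMap.toContinuousLinearMap (Matrix.toEuclideanLin S)
  have hT_pos (x) (hx : x ≠ 0) : 0 < ⟪T x, x⟫ := inner_toEuclideanLin_self_pos hS_pos hx
  have hTA (x) : ⟪T (Matrix.toEuclideanLin A x), x⟫ = 0 := by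
    rw [← inner_toEuclideanLin_self_eq_zero_of_transpose_eq_neg hSA x, toLpLin_mul_same]
    rfl
  have hg : Differentiable ℝ fun x => Real.exp (-⟪T x, x⟫) :=
    (T.differentiable.inner ℝ differentiable_id).neg.exp
  have hg_int := integrable_one_add_norm_mul_exp_neg_inner_apply_self T hT_pos
  refine ⟨integrable_mul_fderiv_apply _ hg.continuous hg_int hCd,
    integral_mul_fderiv_apply_eq_zero_of_trace_eq_zero _ ((trace_toEuclideanLin A).trans hA_tr) hg
      (fderiv_exp_neg_inner_apply_self_apply_eq_zero (T := T)
        (isSymmetric_toEuclideanLin_iff.mpr hS_pos.isHermitian) hTA) hg_int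
      (integrable_norm_mul_norm_fderiv_exp_neg_inner_apply_self T hT_pos)
      (hv.differentiable one_ne_zero) hCv hCd⟩

/-- Vanishing of the Gaussian-weighted integral `∫ e^{−⟨Sx,x⟩} ⟨Ax, ∇v⟩ dx = 0`
when `S` is symmetric positive definite, `tr A = 0` and `S·A` is antisymmetric. -/
theorem stmt_19 (m : ℕ) (S A : Matrix (Fin m) (Fin m) ℝ)
    (hS_symm : S.IsSymm) (hS_pos : S.PosDef)
    (hA_tr : Matrix.trace A = 0) (hSA : (S * A)ᵀ = -(S * A))
    (v : EuclideanSpace ℝ (Fin m) → ℝ) (hv : ContDiff ℝ 1 v)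
    (hv_bdd : ∃ C : ℝ, ∀ x, |v x| ≤ C)
    (hdv_bdd : ∃ C : ℝ, ∀ x, ‖fderiv ℝ v x‖ ≤ C) :
    Integrable (fun x : EuclideanSpace ℝ (Fin m) =>
        Real.exp (-⟪Matrix.toEuclideanLin S x, x⟫) *
          fderiv ℝ v x (Matrix.toEuclideanLin A x)) volume ∧
    ∫ x : EuclideanSpace ℝ (Fin m),
        Real.exp (-⟪Matrix.toEuclideanLin S x, x⟫) *
          fderiv ℝ v x (Matrix.toEuclideanLin A x) = 0 :=
  stmt_19_general m S A hS_pos hA_tr hSA v hv hv_bdd hdv_bdd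
end
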